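/- arXiv:1811.09416 — 3 statements merged into one kernel-verified Lean document; each statement's English description precedes it below -/
import Mathlib

section
/- Let $\mathfrak{g}$ be the 7-dimensional 2-step nilpotent Lie algebra with coframe $\{e^1,\dots,e^7\}$ satisfying $de^i = 0$ for $i \ne 6$ and $de^6 = e^1 \wedge e^7$. Then the 3-form $\varphi = e^{123}+e^{145}+e^{167}+e^{246}-e^{257}-e^{347}-e^{356}$ satisfies $d(*_\varphi \varphi) = 0$, where $*_\varphi\varphi = e^{4567}+e^{2367}+e^{2345}+e^{1357}-e^{1346}-e^{1256}-e^{1247}$; i.e. $\varphi$ is a coclosed ${\rm G}_2$-structure. -/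
/-- Example 3.8: in the Chevalley–Eilenberg complex of the 2-step nilpotent Lie
algebra with `de⁶ = e¹∧e⁷` and all other `deⁱ = 0`, the 4-form
`*φ = e⁴⁵⁶⁷+e²³⁶⁷+e²³⁴⁵+e¹³⁵⁷−e¹³⁴⁶−e¹²⁵⁶−e¹²⁴⁷` is closed, i.e. the standard
G₂-structure `φ` is coclosed.  Here the exterior algebra is modelled by a real
algebra `Λ` with anticommuting generators `e i`, and `d` is a linear map which
is an antiderivation (Leibniz rule on quadruple products). -/
theorem stmt_9 {Λ : Type*} [Ring Λ] [Algebra ℝ Λ]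
    (e : ℕ → Λ)
    (hanti : ∀ i j, e i * e j = -(e j * e i))
    (d : Λ →ₗ[ℝ] Λ)
    (hclosed : ∀ i, 1 ≤ i → i ≤ 7 → i ≠ 6 → d (e i) = 0)
    (hd6 : d (e 6) = e 1 * e 7)
    (hLeib4 : ∀ i j k l : ℕ,
      d (e i * e j * e k * e l) =
        d (e i) * e j * e k * e l - e i * d (e j) * e k * e l
        + e i * e j * d (e k) * e l - e i * e j * e k * d (e l)) :
    d (e 4*e 5*e 6*e 7 + e 2*e 3*e 6*e 7 + e 2*e 3*e 4*e 5 + e 1*e 3*e 5*e 7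
       - e 1*e 3*e 4*e 6 - e 1*e 2*e 5*e 6 - e 1*e 2*e 4*e 7) = 0 := by
  have hsq : ∀ i : ℕ, e i * e i = 0 := by
    intro i
    have h := hanti i i
    have hadd : e i * e i + e i * e i = 0 := eq_neg_iff_add_eq_zero.mp h
    have h2 : (2:ℝ) • (e i * e i) = 0 := by rw [two_smul]; exact hadd
    have := congrArg (fun x => (1/2:ℝ) • x) h2
    simpa [smul_smul] using this
  have hz1 : ∀ a b : Λ, a * b * (e 1 * e 7) * e 7 = 0 := by
    intro a b
    have h0 : e 7 * e 7 = 0 := hsq 7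
    calc a * b * (e 1 * e 7) * e 7 = a * b * (e 1 * (e 7 * e 7)) := by noncomm_ring
      _ = 0 := by rw [h0]; simp
  have hz2 : ∀ i j : ℕ, e 1 * e i * e j * (e 1 * e 7) = 0 := by
    intro i j
    have h1 : e j * e 1 = -(e 1 * e j) := hanti j 1
    have h2 : e i * e 1 = -(e 1 * e i) := hanti i 1
    have h0 : e 1 * e 1 = 0 := hsq 1
    calc e 1 * e i * e j * (e 1 * e 7)
        = e 1 * e i * (e j * e 1) * e 7 := by noncomm_ring
      _ = -(e 1 * (e i * e 1) * e j * e 7) := by rw [h1]; noncomm_ring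
      _ = -(-(e 1 * e 1 * (e i * e j) * e 7)) := by rw [h2]; noncomm_ring
      _ = 0 := by rw [h0]; simp
  have hc1 := hclosed 1 (by norm_num) (by norm_num) (by norm_num)
  have hc2 := hclosed 2 (by norm_num) (by norm_num) (by norm_num)
  have hc3 := hclosed 3 (by norm_num) (by norm_num) (by norm_num)
  have hc4 := hclosed 4 (by norm_num) (by norm_num) (by norm_num)
  have hc5 := hclosed 5 (by norm_num) (by norm_num) (by norm_num)
  have hc7 := hclosed 7 (by norm_num) (by norm_num) (by norm_num)
  simp only [map_add, map_sub, hLeib4, hc1, hc2, hc3, hc4, hc5, hc7, hd6,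
    zero_mul, mul_zero, sub_zero, zero_sub, add_zero, zero_add, neg_zero,
    neg_neg, sub_neg_eq_add, hz1 (e 4) (e 5), hz1 (e 2) (e 3),
    hz2 3 4, hz2 2 5]
end

section
/- Let $\mathfrak{g}$ be the 7-dimensional nilpotent Lie algebra with coframe $\{e^1,\dots,e^7\}$ satisfying $de^i=0$ for $i=1,3,5,7$, $de^2=-e^{13}$, $de^4=e^{15}$, $de^6=e^{17}$. Then the 3-form $\varphi = e^{123}+e^{145}+e^{167}+e^{246}-e^{257}-e^{347}-e^{356}$ is coclosed, i.e. $d(e^{4567}+e^{2367}+e^{2345}+e^{1357}-e^{1346}-e^{1256}-e^{1247}) = 0$. -/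
/-- Example 3.9: in the Chevalley–Eilenberg complex of the nilpotent Lie algebra
with `de² = −e¹³`, `de⁴ = e¹⁵`, `de⁶ = e¹⁷` and `de¹ = de³ = de⁵ = de⁷ = 0`, the
4-form `*φ = e⁴⁵⁶⁷+e²³⁶⁷+e²³⁴⁵+e¹³⁵⁷−e¹³⁴⁶−e¹²⁵⁶−e¹²⁴⁷` is closed, i.e. the
standard G₂-structure `φ` is coclosed. -/
theorem stmt_10 {Λ : Type*} [Ring Λ] [Algebra ℝ Λ]
    (e : ℕ → Λ)
    (hanti : ∀ i j, e i * e j = -(e j * e i))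
    (d : Λ →ₗ[ℝ] Λ)
    (h1 : d (e 1) = 0) (h3 : d (e 3) = 0) (h5 : d (e 5) = 0) (h7 : d (e 7) = 0)
    (h2 : d (e 2) = -(e 1 * e 3)) (h4 : d (e 4) = e 1 * e 5) (h6 : d (e 6) = e 1 * e 7)
    (hLeib4 : ∀ i j k l : ℕ,
      d (e i * e j * e k * e l) =
        d (e i) * e j * e k * e l - e i * d (e j) * e k * e l
        + e i * e j * d (e k) * e l - e i * e j * e k * d (e l)) :
    d (e 4*e 5*e 6*e 7 + e 2*e 3*e 6*e 7 + e 2*e 3*e 4*e 5 + e 1*e 3*e 5*e 7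
       - e 1*e 3*e 4*e 6 - e 1*e 2*e 5*e 6 - e 1*e 2*e 4*e 7) = 0 := by
  have hsq : ∀ i, e i * e i = 0 := by
    intro i
    have h := hanti i i
    have h2' : (2 : ℝ) • (e i * e i) = 0 := by
      rw [two_smul]
      nth_rewrite 1 [h]
      exact neg_add_cancel _
    have := congrArg (fun x => (2⁻¹ : ℝ) • x) h2'
    simpa [smul_smul] using this
  have hsq' : ∀ i (x : Λ), e i * (e i * x) = 0 := by
    intro i x; rw [← mul_assoc, hsq, zero_mul]
  have hswap : ∀ i j (x : Λ), e i * (e j * x) = -(e j * (e i * x)) := by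
    intro i j x; rw [← mul_assoc, hanti i j, neg_mul, mul_assoc]
  simp only [map_add, map_sub, hLeib4]
  simp only [h1, h2, h3, h4, h5, h6, h7,
    zero_mul, mul_zero, neg_mul, mul_neg, neg_neg, mul_assoc,
    hsq, hsq', hswap 2 1, hswap 3 1, hswap 4 1, hswap 5 1,
    sub_zero, zero_sub, add_zero, zero_add, neg_zero, sub_self]
end

section
/- Let $\psi$ be a nearly parallel ${\rm G}_2$-structure on a 7-manifold, i.e. $d\psi = 0$ and $d(*_\psi\psi) = \tau_0 \psi$ for a constant $\tau_0$, with $\operatorname{tr} T_\psi = \frac14 *_\psi(d*_\psi\psi \wedge *_\psi\psi) = \frac{7}{4}\tau_0$ (so that $*_\psi(\psi \wedge *_\psi\psi)=7$). Then $\Delta_\psi \psi + 2d\big((A - \operatorname{tr} T_\psi)*_\psi\psi\big) = \tau_0\big(2A - \tfrac{5}{2}\tau_0\big)\psi$. In particular $\psi$ is a stationary point of the modified Laplacian coflow if and only if $\tau_0 = 0$ or $\tau_0 = \tfrac{4}{5}A$. -/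
/-- For a nearly parallel G₂-structure `ψ` (a closed 4-form with
`d(*ψ) = τ₀ ψ` and `tr T_ψ = (7/4)τ₀`), one has
`Δψ + 2d((A − tr T_ψ)*ψ) = τ₀(2A − (5/2)τ₀) ψ`, where
`Δψ = d * d * ψ`; in particular `ψ` is stationary for the modified Laplacian
coflow iff `τ₀ = 0` or `τ₀ = (4/5)A`.  Forms are modelled by a real algebra `Λ`
with linear maps `d` (exterior differential) and `hodge` (Hodge star), and the
normalization `*(ψ ∧ *ψ) = 7` is recorded via `htr7`. -/
theorem stmt_11 {Λ : Type*} [Ring Λ] [Algebra ℝ Λ]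
    (d hodge : Λ →ₗ[ℝ] Λ) (ψ : Λ) (τ0 A : ℝ)
    (hclosed : d ψ = 0)
    (hNP : d (hodge ψ) = τ0 • ψ)
    (hstarstar : hodge (hodge ψ) = ψ)
    (htr7 : hodge (ψ * hodge ψ) = algebraMap ℝ Λ 7)
    (hψ : ∀ r : ℝ, r • ψ = 0 → r = 0) :
    d (hodge (d (hodge ψ))) + ((2:ℝ) * (A - (7/4) * τ0)) • d (hodge ψ)
      = (τ0 * (2*A - (5/2)*τ0)) • ψ ∧
    (d (hodge (d (hodge ψ))) + ((2:ℝ) * (A - (7/4) * τ0)) • d (hodge ψ) = 0 ↔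
      τ0 = 0 ∨ τ0 = (4/5) * A) := by
  have key : d (hodge (d (hodge ψ))) + ((2:ℝ) * (A - (7/4) * τ0)) • d (hodge ψ)
      = (τ0 * (2*A - (5/2)*τ0)) • ψ := by
    simp only [hNP, map_smul, smul_smul, ← add_smul]
    congr 1
    ring
  refine ⟨key, ?_⟩
  rw [key]
  constructor
  · intro h
    have := hψ _ h
    rcases mul_eq_zero.mp this with h0 | h0
    · exact Or.inl h0
    · right; linarith
  · rintro (h0 | h0) <;> rw [h0] <;> [skip; ring_nf] <;> simp
end
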